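/- In the finite dihedral group I_2(m), for any u, v: if neither u ≤_R v nor v ≤_R u, then u ∨_R v is the longest element w_0, and every reflection t ∈ T can be written as t = t_k ··· t_1 with each t_j ∈ T_L(u) ∪ T_L(v) and strictly increasing partial lengths ℓ(t_1) < ℓ(t_2 t_1) < ... < ℓ(t_k ··· t_1). -/

import Mathlib

/-- The partial product `t_r t_{r-1} ⋯ t_1` in a group. -/
def groupPartialProd {W : Type*} [Group W] (ts : ℕ → W) (r : ℕ) : W :=
  ((List.range r).map (fun m => ts (r - m))).prod

/-- `t` is reachable by a `(u,v)`-Bruhat path from the identity: `t = t_k ⋯ t_1`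
with all labels `t_j ∈ T_L(u) ∪ T_L(v)` and strictly increasing partial lengths. -/
def CoxBruhatReachable {B W : Type*} [Group W] {M : CoxeterMatrix B}
    (cs : CoxeterSystem M W) (u v t : W) : Prop :=
  ∃ k : ℕ, 1 ≤ k ∧ ∃ ts : ℕ → W,
    (∀ j, 1 ≤ j → j ≤ k → cs.IsLeftInversion u (ts j) ∨ cs.IsLeftInversion v (ts j)) ∧
    t = groupPartialProd ts k ∧
    ∀ j, 1 ≤ j → j < k →
      cs.length (groupPartialProd ts j) < cs.length (groupPartialProd ts (j + 1))

open CoxeterSystem List DihedralGroup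

namespace DihedralAux

variable {W : Type*} [Group W] {m : ℕ} (cs : CoxeterSystem (CoxeterMatrix.I m) W)

local notation "aw" => CoxeterSystem.alternatingWord

lemma f2pairs : ∀ i i' : Fin 2, i ≠ i' → (i = 0 ∧ i' = 1) ∨ (i = 1 ∧ i' = 0) := by decide

lemma f2eq : ∀ a b c : Fin 2, b ≠ c → a ≠ b → a = c := by decide

lemma f2ne : ∀ a b : Fin 2, a ≠ b → b ≠ a := by decide

lemma Mval {i i' : Fin 2} (h : i ≠ i') : CoxeterMatrix.I m i i' = m + 2 := by
  simp [CoxeterMatrix.I, h]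

lemma MvalM {i i' : Fin 2} (h : i ≠ i') : (CoxeterMatrix.I m).M i i' = m + 2 := Mval h

lemma r_pow (n : ℕ) (a : ZMod n) (k : ℕ) :
    (DihedralGroup.r a) ^ k = DihedralGroup.r ((k : ZMod n) * a) := by
  induction k with
  | zero => rw [pow_zero, Nat.cast_zero, zero_mul, DihedralGroup.one_def]
  | succ k ih => rw [pow_succ, ih, r_mul_r]; push_cast; ring_nf

/-- The simple-generator assignment into the dihedral group. -/
def dih (i : Fin 2) : DihedralGroup (m + 2) := DihedralGroup.sr ((i : ℕ) : ZMod (m + 2))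

lemma dih_liftable : CoxeterMatrix.IsLiftable (CoxeterMatrix.I m) (dih (m := m)) := by
  intro i i'
  by_cases h : i = i'
  · subst h
    rw [(CoxeterMatrix.I m).diagonal i, pow_one]; simp only [dih, sr_mul_sr, sub_self]
    rfl
  · rw [Mval h]; simp only [dih, sr_mul_sr]; rw [r_pow, ZMod.natCast_self, zero_mul]
    rfl

/-- The homomorphism from `W` to the concrete dihedral group. -/
def dmap : W →* DihedralGroup (m + 2) := cs.lift ⟨dih, dih_liftable⟩

lemma dmap_simple (i : Fin 2) :
    dmap cs (cs.simple i) = DihedralGroup.sr ((i : ℕ) : ZMod (m + 2)) :=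
  cs.lift_apply_simple dih_liftable i

lemma dmap_aw (i i' : Fin 2) (p : ℕ) :
    dmap cs (cs.wordProd (aw i i' p)) =
      if Even p then
        DihedralGroup.r (((p / 2 : ℕ) : ZMod (m + 2)) * (((i' : ℕ) : ZMod (m + 2)) - ((i : ℕ) : ZMod (m + 2))))
      else
        DihedralGroup.sr (((i' : ℕ) : ZMod (m + 2)) +
          ((p / 2 : ℕ) : ZMod (m + 2)) * (((i' : ℕ) : ZMod (m + 2)) - ((i : ℕ) : ZMod (m + 2)))) := by
  rw [cs.prod_alternatingWord_eq_mul_pow, map_mul, apply_ite (dmap cs), map_one, map_pow,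
    map_mul, dmap_simple, dmap_simple, sr_mul_sr, r_pow]
  by_cases h : Even p <;> simp [h, sr_mul_r]

lemma dmap_aw01 (p : ℕ) :
    dmap cs (cs.wordProd (aw (0 : Fin 2) 1 p)) =
      if Even p then DihedralGroup.r ((p / 2 : ℕ) : ZMod (m + 2))
      else DihedralGroup.sr ((p / 2 + 1 : ℕ) : ZMod (m + 2)) := by
  rw [dmap_aw]
  by_cases h : Even p <;> simp [h] <;> push_cast <;> ring_nf

lemma dmap_aw10 (p : ℕ) :
    dmap cs (cs.wordProd (aw (1 : Fin 2) 0 p)) =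
      if Even p then DihedralGroup.r (-((p / 2 : ℕ) : ZMod (m + 2)))
      else DihedralGroup.sr (-((p / 2 : ℕ) : ZMod (m + 2))) := by
  rw [dmap_aw]
  by_cases h : Even p <;> simp [h] <;> push_cast <;> ring_nf

lemma cast_eq_cast (a b : ℕ) (h : ((a : ZMod (m+2))) = (b : ZMod (m+2))) :
    a % (m+2) = b % (m+2) := (ZMod.natCast_eq_natCast_iff' a b (m+2)).mp h

lemma cast_add_eq_zero (a b : ℕ) (h : ((a : ZMod (m+2))) = -(b : ZMod (m+2))) :
    (a + b) % (m+2) = 0 := by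
  have : (((a + b : ℕ)) : ZMod (m+2)) = ((0 : ℕ) : ZMod (m+2)) := by push_cast; rw [h]; ring
  simpa using cast_eq_cast _ _ this

lemma sum_eq (X : ℕ) (h0 : X % (m+2) = 0) (hle : X ≤ m + 2) : X = 0 ∨ X = m + 2 := by
  rcases Nat.lt_or_ge X (m+2) with h | h
  · left; rwa [Nat.mod_eq_of_lt h] at h0
  · right; omega

/-- Master injectivity lemma for alternating words of length at most `m+2`. -/
lemma master {i i' j j' : Fin 2} (hii : i ≠ i') (hjj : j ≠ j') {p q : ℕ}
    (hqp : q ≤ p) (hpn : p ≤ m + 2)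
    (heq : cs.wordProd (aw i i' p) = cs.wordProd (aw j j' q)) :
    p = q ∧ (0 < q → q < m + 2 → i' = j') := by
  have hd : dmap cs (cs.wordProd (aw i i' p)) = dmap cs (cs.wordProd (aw j j' q)) := by
    rw [heq]
  rcases f2pairs i i' hii with ⟨rfl, rfl⟩ | ⟨rfl, rfl⟩ <;>
    rcases f2pairs j j' hjj with ⟨rfl, rfl⟩ | ⟨rfl, rfl⟩
  · -- (0,1) vs (0,1)
    rw [dmap_aw01, dmap_aw01] at hd
    split_ifs at hd with h1 h2 h2
    · rw [r.injEq] at hd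
      have h := cast_eq_cast _ _ hd
      rw [Nat.even_iff] at h1 h2
      rw [Nat.mod_eq_of_lt (by omega), Nat.mod_eq_of_lt (by omega)] at h
      exact ⟨by omega, fun _ _ => rfl⟩
    · rw [sr.injEq] at hd
      have h := cast_eq_cast _ _ hd
      rw [Nat.not_even_iff] at h1 h2
      rw [Nat.mod_eq_of_lt (by omega), Nat.mod_eq_of_lt (by omega)] at h
      exact ⟨by omega, fun _ _ => rfl⟩
  · -- (0,1) vs (1,0)
    rw [dmap_aw01, dmap_aw10] at hd
    split_ifs at hd with h1 h2 h2
    · rw [r.injEq] at hd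
      have h := cast_add_eq_zero _ _ hd
      rw [Nat.even_iff] at h1 h2
      rcases sum_eq (p/2 + q/2) h (by omega) with h' | h'
      · exact ⟨by omega, fun hq1 _ => by omega⟩
      · exact ⟨by omega, fun _ hq2 => by omega⟩
    · rw [sr.injEq] at hd
      have h := cast_add_eq_zero _ _ hd
      rw [Nat.not_even_iff] at h1 h2
      rcases sum_eq (p/2 + 1 + q/2) h (by omega) with h' | h'
      · exact ⟨by omega, fun _ _ => by omega⟩
      · exact ⟨by omega, fun _ hq2 => by omega⟩
  · -- (1,0) vs (0,1)
    rw [dmap_aw10, dmap_aw01] at hd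
    split_ifs at hd with h1 h2 h2
    · rw [r.injEq] at hd
      have h := cast_add_eq_zero _ _ hd.symm
      rw [Nat.even_iff] at h1 h2
      rcases sum_eq (q/2 + p/2) h (by omega) with h' | h'
      · exact ⟨by omega, fun hq1 _ => by omega⟩
      · exact ⟨by omega, fun _ hq2 => by omega⟩
    · rw [sr.injEq] at hd
      have h := cast_add_eq_zero _ _ hd.symm
      rw [Nat.not_even_iff] at h1 h2
      rcases sum_eq (q/2 + 1 + p/2) h (by omega) with h' | h'
      · exact ⟨by omega, fun _ _ => by omega⟩
      · exact ⟨by omega, fun _ hq2 => by omega⟩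
  · -- (1,0) vs (1,0)
    rw [dmap_aw10, dmap_aw10] at hd
    split_ifs at hd with h1 h2 h2
    · rw [r.injEq, neg_inj] at hd
      have h := cast_eq_cast _ _ hd
      rw [Nat.even_iff] at h1 h2
      rw [Nat.mod_eq_of_lt (by omega), Nat.mod_eq_of_lt (by omega)] at h
      exact ⟨by omega, fun _ _ => rfl⟩
    · rw [sr.injEq, neg_inj] at hd
      have h := cast_eq_cast _ _ hd
      rw [Nat.not_even_iff] at h1 h2
      rw [Nat.mod_eq_of_lt (by omega), Nat.mod_eq_of_lt (by omega)] at h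
      exact ⟨by omega, fun _ _ => rfl⟩

lemma f2succ : ∀ x : Fin 2, x + 1 ≠ x := by decide

@[simp] lemma aw_zero (i i' : Fin 2) : aw i i' 0 = [] := rfl

/-- Extending an alternating word by a suitable letter. -/
lemma ext_alt {i i' : Fin 2} (hii : i ≠ i') (p : ℕ) (x : Fin 2)
    (hx : ∀ q, p = q + 1 → x ≠ (if Even q then i' else i)) :
    ∃ j j', j ≠ j' ∧ x :: aw i i' p = aw j j' (p + 1) := by
  cases p with
  | zero =>
    refine ⟨x + 1, x, f2succ x, ?_⟩
    rfl
  | succ q =>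
    have h := hx q rfl
    refine ⟨i, i', hii, ?_⟩
    rw [alternatingWord_succ' i i' (q + 1)]
    congr 1
    rcases Nat.even_or_odd q with hq | hq
    · rw [if_pos hq] at h
      have : x = i := f2eq x i' i (f2ne i i' hii) h
      rw [if_neg (by simp [Nat.even_add_one, hq]), this]
    · rw [if_neg (by rwa [← Nat.not_even_iff_odd] at hq)] at h
      have : x = i' := f2eq x i i' hii h
      rw [if_pos (Nat.even_add_one.mpr (Nat.not_even_iff_odd.mpr hq)), this]

/-- Every reduced word in the dihedral Coxeter system is an alternating word. -/
lemma reduced_eq_alt : ∀ (ω : List (Fin 2)), cs.IsReduced ω →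
    ∃ i i', i ≠ i' ∧ ω = aw i i' ω.length := by
  intro ω
  induction ω with
  | nil => exact fun _ => ⟨0, 1, by decide, rfl⟩
  | cons x ω' IH =>
    intro hred
    have hred' : cs.IsReduced ω' := by
      have := hred.drop 1
      simpa using this
    obtain ⟨i, i', hii, hω'⟩ := IH hred'
    have hx : ∀ q, ω'.length = q + 1 → x ≠ (if Even q then i' else i) := by
      intro q hq hxe
      have hω'' : ω' = x :: aw i i' q := by
        rw [hω', hq, alternatingWord_succ', ← hxe]
      have hprod : cs.wordProd (x :: ω') = cs.wordProd (aw i i' q) := by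
        rw [hω'', cs.wordProd_cons, cs.wordProd_cons, ← mul_assoc,
          cs.simple_mul_simple_self, one_mul]
      have h1 : cs.length (cs.wordProd (x :: ω')) = (x :: ω').length := hred
      have h2 : cs.length (cs.wordProd (aw i i' q)) ≤ q := by
        have := cs.length_wordProd_le (aw i i' q)
        simpa using this
      rw [hprod] at h1
      simp only [List.length_cons, hq] at h1
      omega
    obtain ⟨j, j', hjj, hcons⟩ := ext_alt hii ω'.length x hx
    refine ⟨j, j', hjj, ?_⟩
    rw [List.length_cons]
    rw [← hcons, hω']
    simp

/-- Every element is the product of an alternating word of its length. -/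
lemma exists_alt (w : W) : ∃ i i', i ≠ i' ∧ w = cs.wordProd (aw i i' (cs.length w)) := by
  obtain ⟨ω, hred, hw⟩ := cs.exists_reduced_word' w
  have hlen : ω.length = cs.length w := by
    have : cs.length (cs.wordProd ω) = ω.length := hred
    rw [← hw] at this
    omega
  obtain ⟨i, i', hii, hωeq⟩ := reduced_eq_alt cs ω hred
  have h1 : w = cs.wordProd (aw i i' ω.length) := by rw [hw, hωeq]; simp
  rw [hlen] at h1
  exact ⟨i, i', hii, h1⟩

/-- Alternating words of length at most `m + 2` are reduced. -/
lemma alt_reduced {i i' : Fin 2} (hii : i ≠ i') :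
    ∀ p, p ≤ m + 2 → cs.length (cs.wordProd (aw i i' p)) = p := by
  intro p
  induction p with
  | zero => intro _; simp [CoxeterSystem.alternatingWord]
  | succ p IH =>
    intro hpn
    have hp : cs.length (cs.wordProd (aw i i' p)) = p := IH (by omega)
    rw [alternatingWord_succ', cs.wordProd_cons]
    rcases cs.length_simple_mul (cs.wordProd (aw i i' p)) (if Even p then i' else i) with h | h
    · rw [h, hp]
    · exfalso
      rw [hp] at h
      set v := cs.simple (if Even p then i' else i) * cs.wordProd (aw i i' p) with hv
      obtain ⟨ω, hred, hveq⟩ := cs.exists_reduced_word' v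
      have hlen : ω.length = cs.length v := by
        have : cs.length (cs.wordProd ω) = ω.length := hred
        rw [← hveq] at this; omega
      obtain ⟨j, j', hjj, hωeq⟩ := reduced_eq_alt cs ω hred
      have h1 : v = cs.wordProd (aw j j' ω.length) := by rw [hveq, hωeq]; simp
      rw [hlen] at h1
      have heq : cs.wordProd (aw i i' (p + 1)) = cs.wordProd (aw j j' (cs.length v)) := by
        rw [← h1, alternatingWord_succ', cs.wordProd_cons, hv]
      have := (master cs hii hjj (by omega : cs.length v ≤ p + 1) hpn heq).1
      omega

lemma drop_aw (i i' : Fin 2) : ∀ k a, (aw i i' (a + k)).drop k = aw i i' a := by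
  intro k
  induction k with
  | zero => intro a; simp
  | succ k IH =>
    intro a
    rw [show a + (k + 1) = (a + k) + 1 from rfl, alternatingWord_succ', List.drop_succ_cons]
    exact IH a

lemma drop_aw' (i i' : Fin 2) (p a : ℕ) (h : a ≤ p) : (aw i i' p).drop a = aw i i' (p - a) := by
  have := drop_aw i i' a (p - a)
  rwa [show p - a + a = p by omega] at this

/-- Precise description of prefixes of alternating words. -/
lemma take_aw {i i' : Fin 2} (hii : i ≠ i') :
    ∀ p a, a ≤ p →
      (aw i i' p).take a = if Even (p - a) then aw i i' a else aw i' i a := by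
  intro p
  induction p with
  | zero =>
    intro a ha
    have : a = 0 := by omega
    subst this
    simp [aw_zero]
  | succ p IH =>
    intro a ha
    rcases Nat.eq_or_lt_of_le ha with heq | hlt
    · subst heq
      rw [List.take_of_length_le (by simp), Nat.sub_self, if_pos (Even.zero)]
    · have ha' : a ≤ p := by omega
      cases a with
      | zero => simp [aw_zero]
      | succ b =>
        have hb : b ≤ p := by omega
        rw [alternatingWord_succ', List.take_succ_cons, IH b hb]
        have hsub : p + 1 - (b + 1) = p - b := by omega
        rw [hsub]
        have hpar := Nat.even_sub hb
        rcases Nat.even_or_odd (p - b) with h | h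
        · rw [if_pos h, if_pos h, alternatingWord_succ' i i' b]
          have hiff : Even p ↔ Even b := hpar.mp h
          by_cases hbe : Even b
          · rw [if_pos (hiff.mpr hbe), if_pos hbe]
          · rw [if_neg (fun hc => hbe (hiff.mp hc)), if_neg hbe]
        · rw [← Nat.not_even_iff_odd] at h
          rw [if_neg h, if_neg h, alternatingWord_succ' i' i b]
          have hiff : ¬(Even p ↔ Even b) := fun hc => h (hpar.mpr hc)
          by_cases hbe : Even b
          · rw [if_neg (fun hc => hiff ⟨fun _ => hbe, fun _ => hc⟩), if_pos hbe]
          · rw [if_pos (by by_contra hc; exact hiff ⟨fun hc2 => absurd hc2 hc, fun hb2 => absurd hb2 hbe⟩), if_neg hbe]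

lemma head_aw (i i' : Fin 2) (p : ℕ) :
    (aw i i' (p + 1)).headI = if Even p then i' else i := by
  rw [alternatingWord_succ']
  rfl

lemma headI_take {α : Type*} [Inhabited α] (l : List α) (a : ℕ) (ha : 1 ≤ a) :
    (l.take a).headI = l.headI := by
  cases l with
  | nil => simp
  | cons x t => cases a with
    | zero => omega
    | succ b => simp

/-- Alternating words of the same positive length and the same first letter are equal. -/
lemma alt_eq_of_head_eq {i i' j j' : Fin 2} (hii : i ≠ i') (hjj : j ≠ j') (a : ℕ)
    (h : (aw i i' (a + 1)).headI = (aw j j' (a + 1)).headI) :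
    aw i i' (a + 1) = aw j j' (a + 1) := by
  rcases f2pairs i i' hii with ⟨rfl, rfl⟩ | ⟨rfl, rfl⟩ <;>
    rcases f2pairs j j' hjj with ⟨rfl, rfl⟩ | ⟨rfl, rfl⟩ <;>
    first
      | rfl
      | (rw [head_aw, head_aw] at h
         rcases Nat.even_or_odd a with ha | ha
         · rw [if_pos ha, if_pos ha] at h; exact absurd h (by decide)
         · rw [← Nat.not_even_iff_odd] at ha
           rw [if_neg ha, if_neg ha] at h; exact absurd h (by decide))

lemma f2both : ∀ a b x : Fin 2, a ≠ x → b ≠ x → a = b := by decide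

lemma swap_top {i i' : Fin 2} (hii : i ≠ i') :
    cs.wordProd (aw i i' (m + 2)) = cs.wordProd (aw i' i (m + 2)) := by
  have h := cs.prod_alternatingWord_eq_prod_alternatingWord_sub i i' (m + 2)
    (by rw [Mval hii]; omega)
  have h2 : (CoxeterMatrix.I m) i i' * 2 - (m + 2) = m + 2 := by rw [Mval hii]; omega
  rwa [h2] at h

lemma take_alt_or {i i' : Fin 2} (hii : i ≠ i') (p a : ℕ) (ha : a ≤ p) :
    ∃ j j', j ≠ j' ∧ (aw i i' p).take a = aw j j' a := by
  rw [take_aw hii p a ha]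
  rcases Nat.even_or_odd (p - a) with h | h
  · exact ⟨i, i', hii, by rw [if_pos h]⟩
  · exact ⟨i', i, f2ne i i' hii, by rw [if_neg (Nat.not_even_iff_odd.mpr h)]⟩

lemma len_top (w₀ : W) (hw₀ : ∀ z : W, cs.length z ≤ cs.length w₀) :
    cs.length w₀ = m + 2 := by
  have hge : m + 2 ≤ cs.length w₀ := by
    have := alt_reduced cs (show (0 : Fin 2) ≠ 1 by decide) (m + 2) (le_refl _)
    calc m + 2 = cs.length (cs.wordProd (aw (0:Fin 2) 1 (m+2))) := this.symm
    _ ≤ cs.length w₀ := hw₀ _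
  rcases Nat.lt_or_ge (m + 2) (cs.length w₀) with hgt | hle
  · exfalso
    obtain ⟨i, i', hii, hrep⟩ := exists_alt cs w₀
    have hM0 : (CoxeterMatrix.I m) i i' ≠ 0 := by rw [MvalM hii]; omega
    have hm2 : cs.length w₀ > (CoxeterMatrix.I m) i i' := by rw [MvalM hii]; omega
    have hnr := cs.not_isReduced_alternatingWord i i' hM0 hm2
    exact hnr (by rw [CoxeterSystem.IsReduced, ← hrep]; simp)
  · omega

lemma eq_of_len_top {z₁ z₂ : W} (h₁ : cs.length z₁ = m + 2) (h₂ : cs.length z₂ = m + 2) :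
    z₁ = z₂ := by
  obtain ⟨i, i', hii, hrep₁⟩ := exists_alt cs z₁
  obtain ⟨j, j', hjj, hrep₂⟩ := exists_alt cs z₂
  rw [h₁] at hrep₁
  rw [h₂] at hrep₂
  rcases f2pairs i i' hii with ⟨rfl, rfl⟩ | ⟨rfl, rfl⟩ <;>
    rcases f2pairs j j' hjj with ⟨rfl, rfl⟩ | ⟨rfl, rfl⟩
  · rw [hrep₁, hrep₂]
  · rw [hrep₁, hrep₂, swap_top cs (by decide : (1:Fin 2) ≠ 0)]
  · rw [hrep₁, hrep₂, ← swap_top cs (by decide : (1:Fin 2) ≠ 0)]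
  · rw [hrep₁, hrep₂]

lemma top_rep (w₀ : W) (hw₀ : ∀ z : W, cs.length z ≤ cs.length w₀)
    {x x' : Fin 2} (hxx : x ≠ x') : w₀ = cs.wordProd (aw x x' (m + 2)) :=
  eq_of_len_top cs (len_top cs w₀ hw₀) (alt_reduced cs hxx (m + 2) (le_refl _))

/-- The element of a prefix of a reduced word is below the whole element. -/
lemma le_of_take {ω : List (Fin 2)} (hred : cs.IsReduced ω) (a : ℕ) (ha : a ≤ ω.length) :
    cs.length (cs.wordProd (ω.take a)) = a ∧
      cs.length (cs.wordProd (ω.take a)) +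
        cs.length ((cs.wordProd (ω.take a))⁻¹ * cs.wordProd ω) = cs.length (cs.wordProd ω) := by
  have hsplit : cs.wordProd ω = cs.wordProd (ω.take a) * cs.wordProd (ω.drop a) := by
    rw [← cs.wordProd_append, List.take_append_drop]
  have h1 : cs.length (cs.wordProd (ω.take a)) = a := by
    have := hred.take a
    rw [CoxeterSystem.IsReduced] at this
    rw [this, List.length_take]
    omega
  have h2 : cs.length (cs.wordProd (ω.drop a)) = ω.length - a := by
    have := hred.drop a
    rw [CoxeterSystem.IsReduced] at this
    rw [this, List.length_drop]
  have h3 : (cs.wordProd (ω.take a))⁻¹ * cs.wordProd ω = cs.wordProd (ω.drop a) := by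
    rw [hsplit, inv_mul_cancel_left]
  rw [h3, h1, h2, hred]
  exact ⟨rfl, by omega⟩

/-- Everything is below the longest element in the right weak order. -/
lemma le_top (w₀ : W) (hw₀ : ∀ z : W, cs.length z ≤ cs.length w₀) (u : W) :
    cs.length u + cs.length (u⁻¹ * w₀) = cs.length w₀ := by
  obtain ⟨i, i', hii, hu⟩ := exists_alt cs u
  have han : cs.length u ≤ m + 2 := by
    have := hw₀ u; rw [len_top cs w₀ hw₀] at this; exact this
  have key : ∀ x x' : Fin 2, x ≠ x' → (aw x x' (m+2)).take (cs.length u) = aw i i' (cs.length u) →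
      cs.length u + cs.length (u⁻¹ * w₀) = cs.length w₀ := by
    intro x x' hxx htake
    have hredz : cs.IsReduced (aw x x' (m + 2)) := by
      rw [CoxeterSystem.IsReduced, length_alternatingWord]
      exact alt_reduced cs hxx (m + 2) (le_refl _)
    have := le_of_take cs hredz (cs.length u) (by simp [han])
    rw [htake, ← hu, ← top_rep cs w₀ hw₀ hxx] at this
    exact this.2
  rcases Nat.even_or_odd (m + 2 - cs.length u) with hpar | hpar
  · refine key i i' hii ?_
    rw [take_aw hii (m + 2) (cs.length u) han, if_pos hpar]
  · refine key i' i (f2ne i i' hii) ?_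
    rw [take_aw (f2ne i i' hii) (m + 2) (cs.length u) han,
      if_neg (Nat.not_even_iff_odd.mpr hpar)]

/-- If two elements' alternating words share the same first letter and one is shorter,
then the shorter is below the longer in right weak order. -/
lemma cmp_of_head {u v : W} {i1 i1' i2 i2' : Fin 2} (h1 : i1 ≠ i1') (h2 : i2 ≠ i2')
    (hu : u = cs.wordProd (aw i1 i1' (cs.length u)))
    (hv : v = cs.wordProd (aw i2 i2' (cs.length v)))
    (ha : 1 ≤ cs.length u) (hab : cs.length u ≤ cs.length v) (hb : cs.length v ≤ m + 2)
    (hhead : (aw i1 i1' (cs.length u)).headI = (aw i2 i2' (cs.length v)).headI) :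
    cs.length u + cs.length (u⁻¹ * v) = cs.length v := by
  set a := cs.length u with hadef
  set b := cs.length v with hbdef
  obtain ⟨z, z', hzz, htake⟩ := take_alt_or h2 b a hab
  have hh2 : (aw z z' a).headI = (aw i1 i1' a).headI := by
    rw [← htake, headI_take _ _ ha, ← hhead]
  obtain ⟨a', rfl'⟩ : ∃ a', a = a' + 1 := ⟨a - 1, by omega⟩
  have hweq : aw i1 i1' a = aw z z' a := by
    rw [rfl'] at hh2 ⊢
    exact alt_eq_of_head_eq h1 hzz a' hh2.symm
  have hredv : cs.IsReduced (aw i2 i2' b) := by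
    rw [CoxeterSystem.IsReduced, length_alternatingWord]
    exact alt_reduced cs h2 b hb
  have hkey := le_of_take cs hredv a (by simp [hab])
  rw [htake, ← hweq, ← hu] at hkey
  have hlenv : cs.length (cs.wordProd (aw i2 i2' b)) = b := alt_reduced cs h2 b hb
  rw [← hv] at hkey
  exact hkey.2

/-- A positive-length element's first letter is a left descent. -/
lemma head_descent {u : W} {i i' : Fin 2} (hii : i ≠ i')
    (hu : u = cs.wordProd (aw i i' (cs.length u)))
    (h1u : 1 ≤ cs.length u) (hun : cs.length u ≤ m + 2) :
    cs.IsLeftDescent u ((aw i i' (cs.length u)).headI) := by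
  obtain ⟨a', ha'⟩ : ∃ a', cs.length u = a' + 1 := ⟨cs.length u - 1, by omega⟩
  have hhead : (aw i i' (cs.length u)).headI = (if Even a' then i' else i) := by
    rw [ha', head_aw]
  have hmul : cs.simple (if Even a' then i' else i) * u = cs.wordProd (aw i i' a') := by
    rw [hu, ha', alternatingWord_succ', cs.wordProd_cons, ← mul_assoc,
      cs.simple_mul_simple_self, one_mul]
  show cs.length (cs.simple ((aw i i' (cs.length u)).headI) * u) < cs.length u
  rw [hhead, hmul, alt_reduced cs hii a' (by omega), ha']
  omega

/-- If `u ≤ z` in right weak order, `u ≠ 1`, and `z` is not the top element, then the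
first letters of the alternating words of `u` and `z` agree. -/
lemma head_of_le {u z : W} {iu iu' iz iz' : Fin 2} (hiu : iu ≠ iu') (hiz : iz ≠ iz')
    (hu : u = cs.wordProd (aw iu iu' (cs.length u)))
    (hz : z = cs.wordProd (aw iz iz' (cs.length z)))
    (hle : cs.length u + cs.length (u⁻¹ * z) = cs.length z)
    (h1 : 1 ≤ cs.length u) (hzn : cs.length z < m + 2) :
    (aw iu iu' (cs.length u)).headI = (aw iz iz' (cs.length z)).headI := by
  set a := cs.length u with hadef
  set c := cs.length z with hcdef
  have hac : a ≤ c := by omega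
  obtain ⟨ω₁, hred1, hu1⟩ := cs.exists_reduced_word' u
  obtain ⟨ω₂, hred2, hu2⟩ := cs.exists_reduced_word' (u⁻¹ * z)
  have hl1 : ω₁.length = a := by
    have : cs.length (cs.wordProd ω₁) = ω₁.length := hred1
    rw [← hu1] at this; omega
  have hl2 : ω₂.length = c - a := by
    have : cs.length (cs.wordProd ω₂) = ω₂.length := hred2
    rw [← hu2] at this; omega
  have hcat : cs.wordProd (ω₁ ++ ω₂) = z := by
    rw [cs.wordProd_append, ← hu1, ← hu2, mul_inv_cancel_left]
  have hredcat : cs.IsReduced (ω₁ ++ ω₂) := by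
    rw [CoxeterSystem.IsReduced, hcat, List.length_append, hl1, hl2, ← hcdef]
    omega
  obtain ⟨j, j', hjj, hcateq⟩ := reduced_eq_alt cs _ hredcat
  have hlencat : (ω₁ ++ ω₂).length = c := by rw [List.length_append, hl1, hl2]; omega
  rw [hlencat] at hcateq
  -- the concatenated word coincides with the canonical word of z
  have hzeq : cs.wordProd (aw j j' c) = cs.wordProd (aw iz iz' c) := by
    rw [← hcateq, hcat, hz]
  have hm := master cs hjj hiz (le_refl c) (by omega) hzeq
  have hj' : j' = iz' := hm.2 (by omega) (by omega)
  have hj : j = iz := f2eq j iz' iz (f2ne iz iz' hiz) (hj' ▸ hjj)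
  rw [hj, hj'] at hcateq
  -- u is the product of the prefix of z's word
  have hω₁ : ω₁ = (aw iz iz' c).take a := by
    rw [← hcateq, ← hl1, List.take_left]
  obtain ⟨y, y', hyy, htake⟩ := take_alt_or hiz c a hac
  have huy : u = cs.wordProd (aw y y' a) := by
    rw [hu1, hω₁, htake]
  have hm2 := master cs hiu hyy (le_refl a) (by omega)
    (by rw [← huy, ← hu])
  have hy' : iu' = y' := hm2.2 (by omega) (by omega)
  have hy : iu = y := f2eq iu y' y (f2ne y y' hyy) (by rw [← hy']; exact hiu)
  calc (aw iu iu' a).headI = (aw y y' a).headI := by rw [hy, hy']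
  _ = ((aw iz iz' c).take a).headI := by rw [htake]
  _ = (aw iz iz' c).headI := headI_take _ _ h1

end DihedralAux


lemma gpp_zero {W : Type*} [Group W] (ts : ℕ → W) : groupPartialProd ts 0 = 1 := rfl

lemma gpp_succ {W : Type*} [Group W] (ts : ℕ → W) (r : ℕ) :
    groupPartialProd ts (r + 1) = ts (r + 1) * groupPartialProd ts r := by
  unfold groupPartialProd
  rw [List.range_succ_eq_map, List.map_cons, List.prod_cons, List.map_map]
  congr 1
  refine congrArg List.prod (List.map_congr_left ?_)
  intro x _
  simp only [Function.comp_apply, Nat.succ_sub_succ]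


open DihedralAux

/-- in the finite dihedral group `I₂(m+2)`, if `u` and `v` are
incomparable in the right weak order, then their join is the longest element `w₀`,
and every reflection is reachable by a `(u,v)`-Bruhat path. -/
theorem dihedral_incomparable_join_is_w0 {W : Type*} [Group W] (m : ℕ)
    (cs : CoxeterSystem (CoxeterMatrix.I m) W) (u v w₀ : W)
    (hw₀ : ∀ z : W, cs.length z ≤ cs.length w₀)
    (h1 : ¬ (cs.length u + cs.length (u⁻¹ * v) = cs.length v))
    (h2 : ¬ (cs.length v + cs.length (v⁻¹ * u) = cs.length u)) :
    ((cs.length u + cs.length (u⁻¹ * w₀) = cs.length w₀) ∧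
     (cs.length v + cs.length (v⁻¹ * w₀) = cs.length w₀) ∧
     (∀ z : W, cs.length u + cs.length (u⁻¹ * z) = cs.length z →
        cs.length v + cs.length (v⁻¹ * z) = cs.length z →
        cs.length w₀ + cs.length (w₀⁻¹ * z) = cs.length z)) ∧
    ∀ t : W, cs.IsReflection t → CoxBruhatReachable cs u v t := by
  classical
  have hune : u ≠ 1 := by rintro rfl; exact h1 (by simp)
  have hvne : v ≠ 1 := by rintro rfl; exact h2 (by simp)
  have hwlen : cs.length w₀ = m + 2 := len_top cs w₀ hw₀
  have hbound : ∀ z : W, cs.length z ≤ m + 2 := fun z => hwlen ▸ hw₀ z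
  have hlu1 : 1 ≤ cs.length u := by
    rcases Nat.eq_zero_or_pos (cs.length u) with h | h
    · exact absurd (cs.length_eq_zero_iff.mp h) hune
    · omega
  have hlv1 : 1 ≤ cs.length v := by
    rcases Nat.eq_zero_or_pos (cs.length v) with h | h
    · exact absurd (cs.length_eq_zero_iff.mp h) hvne
    · omega
  obtain ⟨iu, iu', hiu, hurep⟩ := exists_alt cs u
  obtain ⟨iv, iv', hiv, hvrep⟩ := exists_alt cs v
  have hC2 : ∀ x : Fin 2, cs.IsLeftDescent u x ∨ cs.IsLeftDescent v x := by
    intro x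
    by_contra hc
    push_neg at hc
    have hdu := head_descent cs hiu hurep hlu1 (hbound u)
    have hdv := head_descent cs hiv hvrep hlv1 (hbound v)
    have hxu : (CoxeterSystem.alternatingWord iu iu' (cs.length u)).headI ≠ x :=
      fun he => hc.1 (he ▸ hdu)
    have hxv : (CoxeterSystem.alternatingWord iv iv' (cs.length v)).headI ≠ x :=
      fun he => hc.2 (he ▸ hdv)
    have hheads := f2both _ _ x hxu hxv
    rcases le_total (cs.length u) (cs.length v) with hle | hle
    · exact h1 (cmp_of_head cs hiu hiv hurep hvrep hlu1 hle (hbound v) hheads)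
    · exact h2 (cmp_of_head cs hiv hiu hvrep hurep hlv1 hle (hbound u) hheads.symm)
  refine ⟨⟨le_top cs w₀ hw₀ u, le_top cs w₀ hw₀ v, ?_⟩, ?_⟩
  · intro z hzu hzv
    rcases Nat.lt_or_ge (cs.length z) (m + 2) with hc | hc
    · exfalso
      obtain ⟨iz, iz', hiz, hzrep⟩ := exists_alt cs z
      have hhu := head_of_le cs hiu hiz hurep hzrep hzu hlu1 hc
      have hhv := head_of_le cs hiv hiz hvrep hzrep hzv hlv1 hc
      have hheads : (CoxeterSystem.alternatingWord iu iu' (cs.length u)).headI =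
          (CoxeterSystem.alternatingWord iv iv' (cs.length v)).headI := by rw [hhu, hhv]
      rcases le_total (cs.length u) (cs.length v) with hle | hle
      · exact h1 (cmp_of_head cs hiu hiv hurep hvrep hlu1 hle (hbound v) hheads)
      · exact h2 (cmp_of_head cs hiv hiu hvrep hurep hlv1 hle (hbound u) hheads.symm)
    · have hz : cs.length z = m + 2 := le_antisymm (hbound z) hc
      have hzw : z = w₀ := eq_of_len_top cs hz hwlen
      rw [hzw, inv_mul_cancel]
      simp
  · intro t ht
    have hodd := ht.odd_length
    have hk1 : 1 ≤ cs.length t := by rcases hodd with ⟨c, hcc⟩; omega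
    have hkn : cs.length t ≤ m + 2 := hbound t
    obtain ⟨i, i', hii, htrep⟩ := exists_alt cs t
    set k := cs.length t with hkdef
    set word := CoxeterSystem.alternatingWord i i' k with hworddef
    set ts : ℕ → W := fun j => cs.simple (word.getD (k - j) i) with htsdef
    have hgpp : ∀ j, j ≤ k → groupPartialProd ts j = cs.wordProd (word.drop (k - j)) := by
      intro j
      induction j with
      | zero =>
        intro _
        rw [Nat.sub_zero, gpp_zero, show k = word.length by simp [hworddef],
          List.drop_length, cs.wordProd_nil]
      | succ j IH =>
        intro hj
        rw [gpp_succ, IH (by omega)]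
        have hlt : k - (j + 1) < word.length := by
          rw [hworddef, length_alternatingWord]; omega
        have hcons := List.getElem_cons_drop (as := word) (i := k - (j + 1)) hlt
        rw [show k - (j + 1) + 1 = k - j by omega] at hcons
        rw [← hcons, cs.wordProd_cons]
        have hts : ts (j + 1) = cs.simple (word.getD (k - (j + 1)) i) := rfl
        rw [hts, List.getD_eq_getElem word i hlt]
    have hlen : ∀ j, j ≤ k → cs.length (groupPartialProd ts j) = j := by
      intro j hj
      rw [hgpp j hj, hworddef, drop_aw' i i' k (k - j) (by omega),
        show k - (k - j) = j by omega]
      exact alt_reduced cs hii j (by omega)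
    refine ⟨k, hk1, ts, ?_, ?_, ?_⟩
    · intro j _ _
      rcases hC2 (word.getD (k - j) i) with h | h
      · exact Or.inl ((cs.isLeftInversion_simple_iff_isLeftDescent u _).mpr h)
      · exact Or.inr ((cs.isLeftInversion_simple_iff_isLeftDescent v _).mpr h)
    · rw [hgpp k (le_refl k), Nat.sub_self, List.drop_zero]
      exact htrep
    · intro j hj1 hjk
      rw [hlen j (by omega), hlen (j + 1) (by omega)]
      omega
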